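/- Let Δ be the induced subgraph of Γ₀ on the vertex set {a,b,c,d,q,h} (so Δ has edges ab, bc, cd, da, qa, qb, qc, qd, ha, hb, hd). The group homomorphism ψ : A(Δ) → A(Γ₁) determined by sending q to the product ef and sending each of a, b, c, d, h to the generator of the same name is injective, and its image is the subgroup of A(Γ₁) generated by {a, b, c, d, ef, h}. -/

import Mathlib

/-! `q ↦ ef` respects the relations of `A(Δ)` because `e` and `f` both commute with
`a, b, c, d`. The map `A(Γ₁) → A(Δ)` with `e, g ↦ q`, `f ↦ 1` and the identity on
`a, b, c, d, h` is also well defined (every neighbour of `e` or `g` goes to `q`, `1` or a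
neighbour of `q`, and every relator involving `f` dies), and it is a left inverse of `ψ`.
So `ψ` is injective, and its image is generated by the images of the generators. -/

open scoped commutatorElement

/-- The defining relators of the right-angled Artin group on a simple graph `G`:
the commutators of the generators corresponding to adjacent vertices. -/
def raagRels {V : Type*} (G : SimpleGraph V) : Set (FreeGroup V) :=
  {r | ∃ u v : V, G.Adj u v ∧ r = ⁅FreeGroup.of u, FreeGroup.of v⁆}

/-- The right-angled Artin group on a simple graph `G`. -/
abbrev RAAG {V : Type*} (G : SimpleGraph V) : Type _ := PresentedGroup (raagRels G)

/-- The generator of the right-angled Artin group corresponding to a vertex. -/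
def gen {V : Type*} (G : SimpleGraph V) (v : V) : RAAG G := PresentedGroup.of v

/-- Vertices of the graph Γ₁. -/
inductive V1 : Type | a | b | c | d | e | f | g | h
deriving DecidableEq

/-- The graph Γ₁ with edges ab, bc, cd, da, ea, eb, ec, ed, fa, fb, fc, fd, ef,
ga, gb, gc, ge, ha, hb, hd, hf. -/
def G1 : SimpleGraph V1 := SimpleGraph.fromRel (fun u v => (u, v) ∈
  ([(.a,.b),(.b,.c),(.c,.d),(.d,.a),
    (.e,.a),(.e,.b),(.e,.c),(.e,.d),
    (.f,.a),(.f,.b),(.f,.c),(.f,.d),(.e,.f),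
    (.g,.a),(.g,.b),(.g,.c),(.g,.e),
    (.h,.a),(.h,.b),(.h,.d),(.h,.f)] : List (V1 × V1)))

/-- Vertices of the graph Δ, the induced subgraph of Γ₀ on {a,b,c,d,q,h}. -/
inductive VD : Type | a | b | c | d | q | h
deriving DecidableEq

/-- The graph Δ with edges ab, bc, cd, da, qa, qb, qc, qd, ha, hb, hd. -/
def GD : SimpleGraph VD := SimpleGraph.fromRel (fun u v => (u, v) ∈
  ([(.a,.b),(.b,.c),(.c,.d),(.d,.a),
    (.q,.a),(.q,.b),(.q,.c),(.q,.d),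
    (.h,.a),(.h,.b),(.h,.d)] : List (VD × VD)))

namespace RAAG

variable {V : Type*} (G : SimpleGraph V) {H : Type*} [Group H]

theorem gen_commute {u v : V} (h : G.Adj u v) : Commute (gen G u) (gen G v) :=
  commutatorElement_eq_one_iff_commute.mp <| by
    simpa [gen, PresentedGroup.of, commutatorElement_def] using
      PresentedGroup.one_of_mem (show ⁅FreeGroup.of u, FreeGroup.of v⁆ ∈ raagRels G from
        ⟨u, v, h, rfl⟩)

variable {G}

def lift (f : V → H) (hf : ∀ ⦃u v⦄, G.Adj u v → Commute (f u) (f v)) : RAAG G →* H :=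
  PresentedGroup.toGroup (f := f) <| by
    rintro r ⟨u, v, huv, rfl⟩
    simpa [map_commutatorElement] using commutatorElement_eq_one_iff_commute.mpr (hf huv)

variable {f : V → H} {hf : ∀ ⦃u v⦄, G.Adj u v → Commute (f u) (f v)}

@[simp]
theorem lift_gen (v : V) : lift f hf (gen G v) = f v :=
  PresentedGroup.toGroup.of _

theorem hom_ext {φ ψ : RAAG G →* H} (h : ∀ v, φ (gen G v) = ψ (gen G v)) : φ = ψ :=
  PresentedGroup.ext h

theorem range_lift : (lift f hf).range = Subgroup.closure (Set.range f) := by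
  rw [MonoidHom.range_eq_map, ← PresentedGroup.closure_range_of, MonoidHom.map_closure,
    ← Set.range_comp]
  exact congrArg _ (congrArg Set.range (funext (lift_gen (hf := hf))))

end RAAG

theorem SimpleGraph.of_adj_fromRel_mem {α : Type*} {l : List (α × α)} {P : α → α → Prop}
    (hP : ∀ ⦃u v⦄, P u v → P v u) (hl : ∀ p ∈ l, P p.1 p.2) {u v : α}
    (huv : (SimpleGraph.fromRel fun u v => (u, v) ∈ l).Adj u v) : P u v := by
  obtain ⟨-, h | h⟩ := huv
  exacts [hl _ h, hP (hl _ h)]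

instance : DecidableRel G1.Adj := by unfold G1; infer_instance

instance : DecidableRel GD.Adj := by unfold GD; infer_instance

namespace GD

def embeddingGen : VD → RAAG G1
  | .a => gen G1 .a
  | .b => gen G1 .b
  | .c => gen G1 .c
  | .d => gen G1 .d
  | .q => gen G1 .e * gen G1 .f
  | .h => gen G1 .h

def retractionGen : V1 → RAAG GD
  | .a => gen GD .a
  | .b => gen GD .b
  | .c => gen GD .c
  | .d => gen GD .d
  | .e => gen GD .q
  | .f => 1
  | .g => gen GD .q
  | .h => gen GD .h

theorem commute_embeddingGen ⦃u v : VD⦄ (huv : GD.Adj u v) :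
    Commute (embeddingGen u) (embeddingGen v) := by
  refine SimpleGraph.of_adj_fromRel_mem
    (P := fun u v => Commute (embeddingGen u) (embeddingGen v)) (fun _ _ h => h.symm) ?_ huv
  simp only [List.forall_mem_cons, List.not_mem_nil, IsEmpty.forall_iff, implies_true,
    and_true]
  and_intros <;>
    first
    | exact RAAG.gen_commute G1 (by decide)
    | exact (RAAG.gen_commute G1 (by decide)).mul_left (RAAG.gen_commute G1 (by decide))

theorem commute_retractionGen ⦃u v : V1⦄ (huv : G1.Adj u v) :
    Commute (retractionGen u) (retractionGen v) := by
  refine SimpleGraph.of_adj_fromRel_mem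
    (P := fun u v => Commute (retractionGen u) (retractionGen v)) (fun _ _ h => h.symm) ?_ huv
  simp only [List.forall_mem_cons, List.not_mem_nil, IsEmpty.forall_iff, implies_true,
    and_true]
  and_intros <;>
    first
    | exact Commute.one_left _
    | exact Commute.one_right _
    | exact Commute.refl _
    | exact RAAG.gen_commute GD (by decide)

def embedding : RAAG GD →* RAAG G1 := RAAG.lift embeddingGen commute_embeddingGen

def retraction : RAAG G1 →* RAAG GD := RAAG.lift retractionGen commute_retractionGen

theorem retraction_comp_embedding : retraction.comp embedding = MonoidHom.id _ :=
  RAAG.hom_ext fun v => by cases v <;> simp [embedding, retraction, embeddingGen, retractionGen]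

theorem embedding_injective : Function.Injective embedding :=
  Function.LeftInverse.injective (g := retraction) (DFunLike.congr_fun retraction_comp_embedding)

theorem range_embeddingGen : Set.range embeddingGen =
    {gen G1 .a, gen G1 .b, gen G1 .c, gen G1 .d, gen G1 .e * gen G1 .f, gen G1 .h} := by
  ext x
  constructor
  · rintro ⟨v, rfl⟩
    cases v <;> simp [embeddingGen]
  · rintro (rfl | rfl | rfl | rfl | rfl | rfl)
    exacts [⟨.a, rfl⟩, ⟨.b, rfl⟩, ⟨.c, rfl⟩, ⟨.d, rfl⟩, ⟨.q, rfl⟩, ⟨.h, rfl⟩]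

end GD

/-- There is a (well-defined) group homomorphism `ψ : A(Δ) → A(Γ₁)` sending `q` to the
product `ef` and every other generator to the generator of the same name; it is
injective, and its image is the subgroup of `A(Γ₁)` generated by `{a, b, c, d, ef, h}`. -/
theorem raag_GD_embeds_in_raag_G1 :
    ∃ ψ : RAAG GD →* RAAG G1,
      ψ (gen GD VD.q) = gen G1 V1.e * gen G1 V1.f ∧
      ψ (gen GD VD.a) = gen G1 V1.a ∧
      ψ (gen GD VD.b) = gen G1 V1.b ∧
      ψ (gen GD VD.c) = gen G1 V1.c ∧
      ψ (gen GD VD.d) = gen G1 V1.d ∧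
      ψ (gen GD VD.h) = gen G1 V1.h ∧
      Function.Injective ψ ∧
      ψ.range = Subgroup.closure
        ({gen G1 V1.a, gen G1 V1.b, gen G1 V1.c, gen G1 V1.d,
          gen G1 V1.e * gen G1 V1.f, gen G1 V1.h} : Set (RAAG G1)) :=
  ⟨GD.embedding, RAAG.lift_gen _, RAAG.lift_gen _, RAAG.lift_gen _, RAAG.lift_gen _,
    RAAG.lift_gen _, RAAG.lift_gen _, GD.embedding_injective,
    by rw [GD.embedding, RAAG.range_lift, GD.range_embeddingGen]⟩
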